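/- arXiv:math/0412121 — 2 statements merged into one kernel-verified Lean document; each statement's English description precedes it below -/
import Mathlib

section
/- Let N ≥ 1 and n ≥ 2. Let A(z) = Σ_{j=−n}^{∞} A_j z^j be a formal Laurent series with coefficients A_j ∈ M_N(ℂ), such that the polar coefficients A_{−n}, …, A_{−1} are upper triangular and the leading coefficient A_{−n} is a diagonal matrix with pairwise distinct diagonal entries. Then there exists g ∈ GL_N(ℂ[[z]]) (an N×N matrix of formal power series whose constant term g(0) is invertible) whose reduction modulo z^n is unipotent upper triangular (i.e. as a matrix over ℂ[z]/(z^n) it is upper triangular with all diagonal entries equal to 1), such that the gauge transform g⋆A := g·A·g⁻¹ + g′·g⁻¹ has the normal form g⋆A = Σ_{j=1}^{n} α_j z^{−j} + Σ_{j=0}^{n−2} β_j z^j, where all α_j and β_j are diagonal matrices (in particular all coefficients in degrees ≥ n−1 vanish). -/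
open HahnSeries in
/-- The formal derivative of a complex Laurent series, `(Σ a_k z^k)' = Σ k·a_k z^{k−1}`,
defined coefficientwise. -/
noncomputable def laurentDeriv (f : LaurentSeries ℂ) : LaurentSeries ℂ where
  coeff k := ((k + 1 : ℤ) : ℂ) * f.coeff (k + 1)
  isPWO_support' := by
    apply Set.IsPWO.mono (f.isPWO_support'.image_of_monotone
      (f := fun k : ℤ => k - 1) (fun a b hab => by simpa using hab))
    intro k hk
    have : f.coeff (k + 1) ≠ 0 := by
      intro h
      simp [Function.mem_support, h] at hk
    exact ⟨k + 1, this, by ring⟩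

/-- The entrywise formal derivative of a matrix of Laurent series. -/
noncomputable def matrixLaurentDeriv {N : ℕ}
    (g : Matrix (Fin N) (Fin N) (LaurentSeries ℂ)) :
    Matrix (Fin N) (Fin N) (LaurentSeries ℂ) :=
  Matrix.of fun i j => laurentDeriv (g i j)

/-!
Write `A = z⁻ⁿ Â` with `Â` a matrix of power series. For `g` over `ℂ⟦z⟧` the gauge equation
`g⋆A = z⁻ⁿ B̂` reads `g Â + zⁿ g' = B̂ g`, which is solved order by order. Since `Â(0)` is
diagonal with distinct entries, `[·, Â(0)]` is invertible on off-diagonal matrices: at each order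
this fixes the next (off-diagonal) coefficient of `g` and leaves a diagonal coefficient of `B̂`.
Below order `n` only the upper triangular polar part of `A` enters, so `g` is unipotent upper
triangular modulo `zⁿ`. Finally the diagonal terms of `B̂` of order `≥ 2n - 1` are removed by the
diagonal gauge `exp (-∫ (B̂ - B̂_{<2n-1}) / zⁿ)`, which is `≡ 1` modulo `zⁿ`.
-/

open Matrix PowerSeries Finset Function

section Sylvester

variable {ι K : Type*} [DecidableEq ι] [Field K]

def offDiagSolve (d : ι → K) (R : Matrix ι ι K) : Matrix ι ι K :=
  of fun i j => if i = j then 0 else R i j / (d i - d j)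

theorem offDiagSolve_mul_diagonal_add [Fintype ι] {d : ι → K} (hd : Injective d)
    (R : Matrix ι ι K) :
    offDiagSolve d R * diagonal d + R = diagonal d * offDiagSolve d R + diagonal R.diag := by
  ext i j
  rcases eq_or_ne i j with rfl | hij
  · simp [offDiagSolve]
  · have : d i - d j ≠ 0 := sub_ne_zero.2 (hd.ne hij)
    simp only [offDiagSolve, Matrix.add_apply, mul_diagonal, diagonal_mul, of_apply, if_neg hij,
      diagonal_apply_ne _ hij, add_zero]
    field_simp
    ring

theorem Matrix.BlockTriangular.offDiagSolve {α : Type*} [LinearOrder α] {b : ι → α}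
    {R : Matrix ι ι K} (hR : R.BlockTriangular b) (d : ι → K) :
    (offDiagSolve d R).BlockTriangular b := by
  intro i j hij
  simp [_root_.offDiagSolve, hR hij]

end Sylvester

section GaugeCoeffs

variable {ι K : Type*} [Fintype ι] [DecidableEq ι] [Field K] (a : ℕ → Matrix ι ι K) (n : ℕ)

/- `(G m, b m)`: at order `m + 1`, `G (m + 1) * a 0 - a 0 * G (m + 1) + R = diagonal (b (m + 1))`
where `R` collects the terms of lower order. The `min` only makes the recursion visibly well
founded: it is `m + 2 - n` once `2 ≤ n`. -/
def gaugeCoeffs : ℕ → Matrix ι ι K × (ι → K)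
  | 0 => (1, (a 0).diag)
  | m + 1 =>
    let R := ∑ p : Fin (m + 1), (gaugeCoeffs p).1 * a (m + 1 - p)
      + (m + 2 - n) • (gaugeCoeffs (min (m + 2 - n) m)).1
      - ∑ p : Fin m, diagonal (gaugeCoeffs (p + 1)).2 * (gaugeCoeffs (m - p)).1
    (offDiagSolve (a 0).diag R, R.diag)
termination_by m => m
decreasing_by all_goals omega

def gaugeCoeff (m : ℕ) : Matrix ι ι K := (gaugeCoeffs a n m).1

def normalCoeff (m : ℕ) : ι → K := (gaugeCoeffs a n m).2

variable {a n}

@[simp] theorem gaugeCoeff_zero : gaugeCoeff a n 0 = 1 := by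
  simp [gaugeCoeff, gaugeCoeffs]

@[simp] theorem normalCoeff_zero : normalCoeff a n 0 = (a 0).diag := by
  simp [normalCoeff, gaugeCoeffs]

theorem gaugeCoeffs_succ (hn : 2 ≤ n) (m : ℕ) :
    gaugeCoeffs a n (m + 1) =
      let R := ∑ p ∈ range (m + 1), gaugeCoeff a n p * a (m + 1 - p)
        + (m + 2 - n) • gaugeCoeff a n (m + 2 - n)
        - ∑ p ∈ range m, diagonal (normalCoeff a n (p + 1)) * gaugeCoeff a n (m - p)
      (offDiagSolve (a 0).diag R, R.diag) := by
  rw [gaugeCoeffs, min_eq_left (by omega)]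
  simp only [gaugeCoeff, normalCoeff, ← Fin.sum_univ_eq_sum_range]

theorem diag_gaugeCoeff {m : ℕ} (hm : m ≠ 0) : (gaugeCoeff a n m).diag = 0 := by
  obtain ⟨m, rfl⟩ := Nat.exists_eq_succ_of_ne_zero hm
  ext i
  rw [gaugeCoeff, gaugeCoeffs]
  simp [offDiagSolve]

theorem gaugeCoeff_spec (hn : 2 ≤ n) (ha₀ : (a 0).IsDiag) (hinj : Injective (a 0).diag)
    (m : ℕ) :
    ∑ p ∈ range (m + 1), gaugeCoeff a n p * a (m - p) + (m + 1 - n) • gaugeCoeff a n (m + 1 - n)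
      = ∑ p ∈ range (m + 1), diagonal (normalCoeff a n p) * gaugeCoeff a n (m - p) := by
  have hD : diagonal (a 0).diag = a 0 := ha₀.diagonal_diag
  cases m with
  | zero => simp [Nat.sub_eq_zero_of_le (by omega : 1 ≤ n), hD]
  | succ m =>
    have hsucc := gaugeCoeffs_succ (a := a) hn m
    set R := ∑ p ∈ range (m + 1), gaugeCoeff a n p * a (m + 1 - p)
        + (m + 2 - n) • gaugeCoeff a n (m + 2 - n)
        - ∑ p ∈ range m, diagonal (normalCoeff a n (p + 1)) * gaugeCoeff a n (m - p) with hR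
    have hG : gaugeCoeff a n (m + 1) = offDiagSolve (a 0).diag R := by
      rw [gaugeCoeff, hsucc]
    have hb : normalCoeff a n (m + 1) = R.diag := by
      rw [normalCoeff, hsucc]
    have key := offDiagSolve_mul_diagonal_add hinj R
    rw [hD, ← hG] at key
    rw [sum_range_succ (fun p => gaugeCoeff a n p * a (m + 1 - p)),
      sum_range_succ' (fun p => diagonal (normalCoeff a n p) * gaugeCoeff a n (m + 1 - p)),
      sum_range_succ fun p => diagonal (normalCoeff a n (p + 1)) * gaugeCoeff a n (m + 1 - (p + 1))]
    simp only [Nat.add_sub_add_right, Nat.sub_self, Nat.sub_zero, gaugeCoeff_zero,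
      normalCoeff_zero, hD, hb, mul_one, show m + 1 + 1 - n = m + 2 - n by omega]
    calc _ = gaugeCoeff a n (m + 1) * a 0 + R
          + ∑ p ∈ range m, diagonal (normalCoeff a n (p + 1)) * gaugeCoeff a n (m - p) := by
          rw [hR]; abel
      _ = _ := by rw [key]; abel

theorem blockTriangular_gaugeCoeff {α : Type*} [LinearOrder α] {β : ι → α}
    (ha : ∀ q < n, (a q).BlockTriangular β) : ∀ m < n, (gaugeCoeff a n m).BlockTriangular β := by
  simp_rw [← mem_blockTriangularSubalgebra (R := K)] at ha ⊢
  intro m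
  induction m using Nat.strong_induction_on with
  | _ m ih =>
    intro hm
    cases m with
    | zero => exact gaugeCoeff_zero (a := a) (n := n) ▸ one_mem _
    | succ m =>
      have hdiag (d : ι → K) : diagonal d ∈ blockTriangularSubalgebra K K β :=
        mem_blockTriangularSubalgebra.2 (blockTriangular_diagonal d)
      rw [gaugeCoeff, gaugeCoeffs, Nat.sub_eq_zero_of_le (by omega : m + 2 ≤ n), zero_smul,
        add_zero]
      refine mem_blockTriangularSubalgebra.2
        ((mem_blockTriangularSubalgebra (R := K).1 ?_).offDiagSolve _)
      exact sub_mem (sum_mem fun p _ => mul_mem (ih p (by omega) (by omega)) (ha _ (by omega)))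
        (sum_mem fun p _ => mul_mem (hdiag _) (ih _ (by omega) (by omega)))

end GaugeCoeffs

section PowerSeriesMatrix

variable {ι R : Type*} [CommRing R]

/- `g` transforms the connection `d + A dz / zⁿ` into `d + B dz / zⁿ`: multiplying
`g A g⁻¹ / zⁿ + g' g⁻¹ = B / zⁿ` by `zⁿ g` on the right gives the defining identity. -/
def IsGaugeTransform [Fintype ι] (n : ℕ) (g A B : Matrix ι ι R⟦X⟧) : Prop :=
  g * A + (X : R⟦X⟧) ^ n • g.map (d⁄dX R) = B * g

theorem map_derivative_mul [Fintype ι] (P Q : Matrix ι ι R⟦X⟧) :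
    (P * Q).map (d⁄dX R) = P.map (d⁄dX R) * Q + P * Q.map (d⁄dX R) := by
  ext i j : 1
  simp only [map_apply, Matrix.add_apply, mul_apply, map_sum, Derivation.leibniz, smul_eq_mul,
    ← sum_add_distrib]
  exact sum_congr rfl fun _ _ => by ring

theorem IsGaugeTransform.trans [Fintype ι] {n : ℕ} {g h A B C : Matrix ι ι R⟦X⟧}
    (hg : IsGaugeTransform n g A B) (hh : IsGaugeTransform n h B C) :
    IsGaugeTransform n (h * g) A C := by
  unfold IsGaugeTransform at *
  calc h * g * A + (X : R⟦X⟧) ^ n • (h * g).map (d⁄dX R)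
      = h * (g * A + (X : R⟦X⟧) ^ n • g.map (d⁄dX R)) + (X : R⟦X⟧) ^ n • h.map (d⁄dX R) * g := by
        rw [map_derivative_mul, smul_add, Matrix.mul_add, Matrix.mul_smul, Matrix.smul_mul,
          Matrix.mul_assoc]
        abel
    _ = C * (h * g) := by
        rw [hg, ← Matrix.mul_assoc, ← Matrix.add_mul, hh, Matrix.mul_assoc]

theorem isGaugeTransform_diagonal [Fintype ι] [DecidableEq ι] {n : ℕ} {u β γ : ι → R⟦X⟧}
    (h : ∀ i, u i * β i + X ^ n * d⁄dX R (u i) = γ i * u i) :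
    IsGaugeTransform n (diagonal u) (diagonal β) (diagonal γ) := by
  rw [IsGaugeTransform, diagonal_map (map_zero _), ← diagonal_smul, diagonal_mul_diagonal,
    diagonal_mul_diagonal, diagonal_add]
  exact congrArg diagonal (funext h)

def matrixOfCoeffs (c : ℕ → Matrix ι ι R) : Matrix ι ι R⟦X⟧ :=
  of fun i j => mk fun m => c m i j

@[simp] theorem map_coeff_matrixOfCoeffs (c : ℕ → Matrix ι ι R) (m : ℕ) :
    (matrixOfCoeffs c).map (coeff m) = c m := by
  ext i j
  simp [matrixOfCoeffs]

theorem ext_map_coeff {P Q : Matrix ι ι R⟦X⟧} (h : ∀ m, P.map (coeff m) = Q.map (coeff m)) :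
    P = Q := by
  ext i j m
  exact congrFun (congrFun (h m) i) j

theorem map_coeff_mul [Fintype ι] (P Q : Matrix ι ι R⟦X⟧) (m : ℕ) :
    (P * Q).map (coeff m) = ∑ x ∈ antidiagonal m, P.map (coeff x.1) * Q.map (coeff x.2) := by
  ext i j
  simp only [map_apply, mul_apply, map_sum, coeff_mul, Matrix.sum_apply]
  exact sum_comm

theorem map_coeff_X_pow_smul_map_derivative (n : ℕ) (P : Matrix ι ι R⟦X⟧) (m : ℕ) :
    ((X : R⟦X⟧) ^ n • P.map (d⁄dX R)).map (coeff m) =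
      (m + 1 - n) • P.map (coeff (m + 1 - n)) := by
  ext i j
  simp only [map_apply, Matrix.smul_apply, smul_eq_mul, coeff_X_pow_mul', coeff_derivative]
  split_ifs with h
  · rw [show m + 1 - n = m - n + 1 by omega, nsmul_eq_mul, mul_comm]
    push_cast
    rfl
  · simp [show m + 1 - n = 0 by omega]

theorem coeff_mul_of_X_pow_dvd_sub_one {n m : ℕ} {u : R⟦X⟧} (hu : X ^ n ∣ u - 1) (hm : m < n)
    (f : R⟦X⟧) : coeff m (u * f) = coeff m f := by
  obtain ⟨w, hw⟩ := hu
  rw [show u = 1 + X ^ n * w by rw [← hw]; ring, add_mul, one_mul, map_add, mul_assoc,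
    coeff_X_pow_mul', if_neg (by omega), add_zero]

end PowerSeriesMatrix

section LinearODE

variable {K : Type*} [Field K]

/- The solution `u = exp ∫ s` of `u' = s u`, `u 0 = 1`. -/
noncomputable def odeSolutionCoeff (s : K⟦X⟧) : ℕ → K
  | 0 => 1
  | m + 1 => (m + 1 : K)⁻¹ * ∑ p : Fin (m + 1), coeff p s * odeSolutionCoeff s (m - p)

noncomputable def odeSolution (s : K⟦X⟧) : K⟦X⟧ :=
  mk (odeSolutionCoeff s)

theorem derivative_odeSolution [CharZero K] (s : K⟦X⟧) :
    d⁄dX K (odeSolution s) = s * odeSolution s := by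
  ext m
  rw [coeff_derivative, odeSolution, coeff_mk, odeSolutionCoeff, coeff_mul,
    Nat.sum_antidiagonal_eq_sum_range_succ_mk, ← Fin.sum_univ_eq_sum_range]
  simp only [coeff_mk]
  field_simp

theorem X_pow_succ_dvd_odeSolution_sub_one {t : ℕ} {s : K⟦X⟧} (hs : X ^ t ∣ s) :
    X ^ (t + 1) ∣ odeSolution s - 1 := by
  rw [X_pow_dvd_iff] at hs ⊢
  intro m hm
  cases m with
  | zero => simp [odeSolution, odeSolutionCoeff]
  | succ m =>
    rw [map_sub, coeff_one, if_neg m.succ_ne_zero, sub_zero, odeSolution, coeff_mk,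
      odeSolutionCoeff, sum_eq_zero fun p _ => by rw [hs p (by omega), zero_mul], mul_zero]

theorem exists_mul_add_X_pow_mul_derivative_eq_trunc_mul [CharZero K] (n : ℕ) (f : K⟦X⟧) :
    ∃ u : K⟦X⟧, X ^ n ∣ u - 1 ∧
      u * f + X ^ n * d⁄dX K u = (trunc (2 * n - 1) f : K⟦X⟧) * u := by
  obtain ⟨s, hs⟩ : X ^ n * X ^ (n - 1) ∣ f - (trunc (2 * n - 1) f : K⟦X⟧) := by
    rw [← pow_add, X_pow_dvd_iff]
    intro m hm
    simp [coeff_trunc, show m < 2 * n - 1 by omega]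
  refine ⟨odeSolution (-(X ^ (n - 1) * s)), (pow_dvd_pow X (by omega : n ≤ n - 1 + 1)).trans
    (X_pow_succ_dvd_odeSolution_sub_one (dvd_neg.2 (dvd_mul_right _ _))), ?_⟩
  rw [derivative_odeSolution]
  linear_combination odeSolution (-(X ^ (n - 1) * s)) * hs

end LinearODE

section NormalForm

variable {ι K : Type*} [Fintype ι] [DecidableEq ι] [Field K] {a : ℕ → Matrix ι ι K} {n : ℕ}

theorem isGaugeTransform_gaugeCoeff (hn : 2 ≤ n) (ha₀ : (a 0).IsDiag)
    (hinj : Injective (a 0).diag) :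
    IsGaugeTransform n (matrixOfCoeffs (gaugeCoeff a n)) (matrixOfCoeffs a)
      (diagonal fun i => mk fun m => normalCoeff a n m i) := by
  refine ext_map_coeff fun m => ?_
  rw [Matrix.map_add _ (map_add _), map_coeff_mul, map_coeff_mul,
    map_coeff_X_pow_smul_map_derivative]
  simp only [map_coeff_matrixOfCoeffs, diagonal_map, map_zero, coeff_mk,
    Nat.sum_antidiagonal_eq_sum_range_succ_mk]
  exact gaugeCoeff_spec hn ha₀ hinj m

theorem exists_isGaugeTransform_normalForm [CharZero K] (hn : 2 ≤ n) (ha₀ : (a 0).IsDiag)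
    (hinj : Injective (a 0).diag) :
    ∃ g B : Matrix ι ι K⟦X⟧, IsGaugeTransform n g (matrixOfCoeffs a) B ∧
      (∀ m < n, g.map (coeff m) = gaugeCoeff a n m) ∧ (∀ m, (B.map (coeff m)).IsDiag) ∧
      ∀ m, 2 * n - 1 ≤ m → B.map (coeff m) = 0 := by
  choose u hu_one hu_gauge using fun i =>
    exists_mul_add_X_pow_mul_derivative_eq_trunc_mul n (mk fun m => normalCoeff a n m i)
  refine ⟨diagonal u * matrixOfCoeffs (gaugeCoeff a n), _,
    (isGaugeTransform_gaugeCoeff hn ha₀ hinj).trans (isGaugeTransform_diagonal hu_gauge),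
    fun m hm => ?_, fun m => ?_, fun m hm => ?_⟩
  · ext i j
    simp [diagonal_mul, coeff_mul_of_X_pow_dvd_sub_one (hu_one i) hm, matrixOfCoeffs]
  · rw [diagonal_map (map_zero _)]
    exact isDiag_diagonal _
  · rw [diagonal_map (map_zero _)]
    ext i j
    simp [Polynomial.coeff_coe, coeff_trunc, show ¬m < 2 * n - 1 by omega]

end NormalForm

section Laurent

open HahnSeries

theorem coeff_ofPowerSeries {R : Type*} [Semiring R] (f : R⟦X⟧) (k : ℤ) :
    (ofPowerSeries ℤ R f).coeff k = if 0 ≤ k then coeff k.toNat f else 0 := by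
  split_ifs with hk
  · lift k to ℕ using hk
    exact ofPowerSeries_apply_coeff f k
  · rw [ofPowerSeries_apply]
    refine embDomain_of_notMem_range fun ⟨m, hm⟩ => hk ?_
    rw [← hm]
    exact Int.natCast_nonneg m

theorem coeff_single_neg_mul {R : Type*} [Semiring R] (n : ℕ) (x : LaurentSeries R) (k : ℤ) :
    (single (-(n : ℤ)) (1 : R) * x).coeff k = x.coeff (k + n) := by
  simpa using coeff_single_mul_add (r := (1 : R)) (x := x) (a := k + n) (b := -(n : ℤ))

theorem eq_single_neg_mul_ofPowerSeries {R : Type*} [Semiring R] {n : ℕ} {x : LaurentSeries R}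
    (hx : ∀ k < -(n : ℤ), x.coeff k = 0) :
    x = single (-(n : ℤ)) 1 * ofPowerSeries ℤ R (mk fun m => x.coeff (m - n)) := by
  ext k
  rw [coeff_single_neg_mul, coeff_ofPowerSeries]
  split_ifs with hk
  · rw [coeff_mk]
    congr
    omega
  · exact hx k (by omega)

theorem laurentDeriv_ofPowerSeries (f : ℂ⟦X⟧) :
    laurentDeriv (ofPowerSeries ℤ ℂ f) = ofPowerSeries ℤ ℂ (d⁄dX ℂ f) := by
  ext k
  change ((k + 1 : ℤ) : ℂ) * (ofPowerSeries ℤ ℂ f).coeff (k + 1) = _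
  rw [coeff_ofPowerSeries, coeff_ofPowerSeries]
  rcases lt_trichotomy k (-1) with hk | rfl | hk
  · rw [if_neg (by omega), if_neg (by omega), mul_zero]
  · simp
  · lift k to ℕ using (by omega)
    rw [if_pos (by omega), if_pos (by omega), coeff_derivative, mul_comm]
    push_cast
    rfl

theorem isUnit_of_isUnit_map_constantCoeff {ι R : Type*} [Fintype ι] [DecidableEq ι]
    [CommRing R] {g : Matrix ι ι R⟦X⟧} (hg : IsUnit (g.map constantCoeff)) : IsUnit g := by
  rw [isUnit_iff_isUnit_det, isUnit_iff_constantCoeff, RingHom.map_det]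
  exact (isUnit_iff_isUnit_det _).1 hg

theorem gauge_eq_of_isGaugeTransform {N n : ℕ} {g A B : Matrix (Fin N) (Fin N) ℂ⟦X⟧}
    (h : IsGaugeTransform n g A B) (hg : IsUnit (g.map constantCoeff)) :
    g.map (ofPowerSeries ℤ ℂ) *
          (HahnSeries.single (-(n : ℤ)) (1 : ℂ) • A.map (ofPowerSeries ℤ ℂ)) *
        (g.map (ofPowerSeries ℤ ℂ))⁻¹ +
      matrixLaurentDeriv (g.map (ofPowerSeries ℤ ℂ)) * (g.map (ofPowerSeries ℤ ℂ))⁻¹ =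
      HahnSeries.single (-(n : ℤ)) (1 : ℂ) • B.map (ofPowerSeries ℤ ℂ) := by
  set Φ := (ofPowerSeries ℤ ℂ).mapMatrix (m := Fin N)
  set c := HahnSeries.single (-(n : ℤ)) (1 : ℂ)
  have hunit : IsUnit (Φ g).det :=
    (isUnit_iff_isUnit_det _).1 ((isUnit_of_isUnit_map_constantCoeff hg).map Φ)
  have hderiv : matrixLaurentDeriv (Φ g) = c • Φ ((X : ℂ⟦X⟧) ^ n • g.map (d⁄dX ℂ)) := by
    ext i j : 1
    simp [matrixLaurentDeriv, Φ, c, laurentDeriv_ofPowerSeries, ← mul_assoc]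
  have key : Φ g * (c • Φ A) + matrixLaurentDeriv (Φ g) = (c • Φ B) * Φ g := by
    rw [hderiv, Matrix.mul_smul (Φ g) c (Φ A), ← smul_add, ← map_mul, ← map_add, h, map_mul,
      Matrix.smul_mul c (Φ B) (Φ g)]
  change Φ g * (c • Φ A) * (Φ g)⁻¹ + matrixLaurentDeriv (Φ g) * (Φ g)⁻¹ = c • Φ B
  rw [← Matrix.add_mul, key, Matrix.mul_assoc, mul_nonsing_inv _ hunit, Matrix.mul_one]

end Laurent

theorem stmt_10_general (N n : ℕ) (hn : 2 ≤ n)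
    (A : Matrix (Fin N) (Fin N) (LaurentSeries ℂ))
    (hA_pole : ∀ k : ℤ, k < -(n : ℤ) → ∀ i j : Fin N, (A i j).coeff k = 0)
    (hA_upper : ∀ k : ℤ, -(n : ℤ) ≤ k → k ≤ -1 →
      ∀ i j : Fin N, j < i → (A i j).coeff k = 0)
    (hA_lead_diag : (Matrix.of fun i j : Fin N => (A i j).coeff (-(n : ℤ))).IsDiag)
    (hA_lead_distinct : Function.Injective fun i : Fin N => (A i i).coeff (-(n : ℤ))) :
    ∃ g : Matrix (Fin N) (Fin N) (LaurentSeries ℂ),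
      -- entries of `g` are formal power series
      (∀ i j : Fin N, ∀ k : ℤ, k < 0 → (g i j).coeff k = 0) ∧
      -- the constant term `g(0)` is invertible, i.e. `g ∈ GL_N(ℂ[[z]])`
      IsUnit (Matrix.of fun i j : Fin N => (g i j).coeff 0) ∧
      -- `g` is unipotent upper triangular modulo `z^n`
      (∀ i j : Fin N, j < i → ∀ k : ℤ, k < (n : ℤ) → (g i j).coeff k = 0) ∧
      (∀ i : Fin N, (g i i).coeff 0 = 1 ∧
        ∀ k : ℤ, 0 < k → k < (n : ℤ) → (g i i).coeff k = 0) ∧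
      -- the gauge transform is in normal form
      (∀ k : ℤ, (Matrix.of fun i j : Fin N =>
          ((g * A * g⁻¹ + matrixLaurentDeriv g * g⁻¹) i j).coeff k).IsDiag) ∧
      (∀ k : ℤ, k < -(n : ℤ) → ∀ i j : Fin N,
        ((g * A * g⁻¹ + matrixLaurentDeriv g * g⁻¹) i j).coeff k = 0) ∧
      (∀ k : ℤ, (n : ℤ) - 1 ≤ k → ∀ i j : Fin N,
        ((g * A * g⁻¹ + matrixLaurentDeriv g * g⁻¹) i j).coeff k = 0) := by
  set a : ℕ → Matrix (Fin N) (Fin N) ℂ := fun m => of fun i j => (A i j).coeff (m - n)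
  have hA : A = HahnSeries.single (-(n : ℤ)) (1 : ℂ) •
      (matrixOfCoeffs a).map (HahnSeries.ofPowerSeries ℤ ℂ) := by
    ext i j : 1
    exact eq_single_neg_mul_ofPowerSeries fun k hk => hA_pole k hk i j
  have ha₀ : (a 0).IsDiag := by simpa [a] using hA_lead_diag
  have hinj : Injective (a 0).diag := fun i j hij => hA_lead_distinct (by simpa [a] using hij)
  have ha : ∀ q < n, (a q).BlockTriangular id :=
    fun q hq i j hij => hA_upper _ (by omega) (by omega) i j hij
  obtain ⟨g, B, hgauge, hg, hB_diag, hB_tail⟩ := exists_isGaugeTransform_normalForm hn ha₀ hinj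
  have hg₀ : g.map constantCoeff = 1 := by
    simpa [← coeff_zero_eq_constantCoeff] using hg 0 (by omega)
  have hnormal := gauge_eq_of_isGaugeTransform hgauge (hg₀ ▸ isUnit_one)
  rw [← hA] at hnormal
  refine ⟨g.map (HahnSeries.ofPowerSeries ℤ ℂ), ?_, ?_, ?_, ?_, ?_, ?_, ?_⟩ <;>
    simp only [hnormal, Matrix.smul_apply, smul_eq_mul, map_apply, coeff_single_neg_mul,
      coeff_ofPowerSeries]
  · intro i j k hk
    rw [if_neg (by omega)]
  · simp only [le_refl, if_true, Int.toNat_zero, coeff_zero_eq_constantCoeff]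
    exact (congrArg IsUnit hg₀).mpr isUnit_one
  · intro i j hij k hk
    split_ifs
    · exact (congrFun₂ (hg _ (by omega)) i j).trans
        (blockTriangular_gaugeCoeff ha _ (by omega) hij)
    · rfl
  · intro i
    refine ⟨by simpa [coeff_zero_eq_constantCoeff] using congrFun₂ hg₀ i i, fun k hk hkn => ?_⟩
    rw [if_pos hk.le]
    exact (congrFun₂ (hg _ (by omega)) i i).trans (congrFun (diag_gaugeCoeff (by omega)) i)
  · intro k i j hij
    split_ifs
    · exact hB_diag _ hij
    · rfl
  · intro k hk i j
    rw [if_neg (by omega)]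
  · intro k hk i j
    rw [if_pos (by omega)]
    exact congrFun₂ (hB_tail _ (by omega)) i j

/-- Existence of the formal normal form: if `A(z) = Σ_{j≥−n} A_j z^j` is a matrix
Laurent series whose polar coefficients `A_{−n}, …, A_{−1}` are upper triangular, and
whose leading coefficient `A_{−n}` is diagonal with pairwise distinct diagonal entries,
then there is `g ∈ GL_N(ℂ[[z]])` (entries are power series, constant term invertible),
unipotent upper triangular modulo `z^n`, such that the gauge transform
`g⋆A = g·A·g⁻¹ + g′·g⁻¹` equals `Σ_{j=1}^n α_j z^{−j} + Σ_{j=0}^{n−2} β_j z^j` with all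
coefficients `α_j`, `β_j` diagonal. -/
theorem stmt_10 (N n : ℕ) (hN : 1 ≤ N) (hn : 2 ≤ n)
    (A : Matrix (Fin N) (Fin N) (LaurentSeries ℂ))
    (hA_pole : ∀ k : ℤ, k < -(n : ℤ) → ∀ i j : Fin N, (A i j).coeff k = 0)
    (hA_upper : ∀ k : ℤ, -(n : ℤ) ≤ k → k ≤ -1 →
      ∀ i j : Fin N, j < i → (A i j).coeff k = 0)
    (hA_lead_diag : (Matrix.of fun i j : Fin N => (A i j).coeff (-(n : ℤ))).IsDiag)
    (hA_lead_distinct : Function.Injective fun i : Fin N => (A i i).coeff (-(n : ℤ))) :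
    ∃ g : Matrix (Fin N) (Fin N) (LaurentSeries ℂ),
      -- entries of `g` are formal power series
      (∀ i j : Fin N, ∀ k : ℤ, k < 0 → (g i j).coeff k = 0) ∧
      -- the constant term `g(0)` is invertible, i.e. `g ∈ GL_N(ℂ[[z]])`
      IsUnit (Matrix.of fun i j : Fin N => (g i j).coeff 0) ∧
      -- `g` is unipotent upper triangular modulo `z^n`
      (∀ i j : Fin N, j < i → ∀ k : ℤ, k < (n : ℤ) → (g i j).coeff k = 0) ∧
      (∀ i : Fin N, (g i i).coeff 0 = 1 ∧
        ∀ k : ℤ, 0 < k → k < (n : ℤ) → (g i i).coeff k = 0) ∧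
      -- the gauge transform is in normal form
      (∀ k : ℤ, (Matrix.of fun i j : Fin N =>
          ((g * A * g⁻¹ + matrixLaurentDeriv g * g⁻¹) i j).coeff k).IsDiag) ∧
      (∀ k : ℤ, k < -(n : ℤ) → ∀ i j : Fin N,
        ((g * A * g⁻¹ + matrixLaurentDeriv g * g⁻¹) i j).coeff k = 0) ∧
      (∀ k : ℤ, (n : ℤ) - 1 ≤ k → ∀ i j : Fin N,
        ((g * A * g⁻¹ + matrixLaurentDeriv g * g⁻¹) i j).coeff k = 0) :=
  stmt_10_general N n hn A hA_pole hA_upper hA_lead_diag hA_lead_distinct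
end

section
/- Let N ≥ 1 and n ≥ 2. Let B(z) = Σ_{j=−n}^{n−2} B_j z^j and C(z) = Σ_{j=−n}^{n−2} C_j z^j be formal Laurent series with coefficients in M_N(ℂ) such that all B_j and C_j are diagonal matrices and B_{−n} has pairwise distinct diagonal entries. Suppose there exists g ∈ GL_N(ℂ[[z]]) whose reduction modulo z^n is unipotent upper triangular (upper triangular with all diagonal entries 1 as a matrix over ℂ[z]/(z^n)) such that g·B·g⁻¹ + g′·g⁻¹ = C. Then B = C (i.e. B_j = C_j for all j). -/
/-! Only the diagonal entries of the gauge relation matter. Multiplied by `g`, its `(i, i)` entry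
reads `g_ii (C_ii − B_ii) = g_ii′`. As `g_ii ≡ 1 mod z^n`, the derivative `g_ii′` has no terms
below `z^{n−1}`, whereas `g_ii (C_ii − B_ii)` has the same lowest term as `C_ii − B_ii`, which
lies in degree at most `n − 2`. Hence `C_ii = B_ii`. -/

open HahnSeries

theorem HahnSeries.order_eq_zero_of_coeff_zero_ne_zero {Γ R : Type*} [Zero Γ] [LinearOrder Γ]
    [Zero R] {x : HahnSeries Γ R} (h0 : x.coeff 0 ≠ 0) (hneg : ∀ k < 0, x.coeff k = 0) :
    x.order = 0 :=
  le_antisymm (order_le_of_coeff_ne_zero h0) <| not_lt.mp fun hlt =>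
    mt coeff_order_eq_zero.mp (ne_zero_of_coeff_ne_zero h0) (hneg _ hlt)

theorem Matrix.isDiag_of_forall_isDiag_coeff {ι Γ R : Type*} [PartialOrder Γ] [Zero R]
    {B : Matrix ι ι (HahnSeries Γ R)}
    (h : ∀ k, (Matrix.of fun i j => (B i j).coeff k).IsDiag) : B.IsDiag :=
  fun _ _ hij => HahnSeries.ext <| funext fun k => h k hij

theorem LaurentSeries.isUnit_det_of_isUnit_coeff_zero {ι R : Type*} [Fintype ι] [DecidableEq ι]
    [CommRing R] {g : Matrix ι ι (LaurentSeries R)} (hpow : ∀ i j, ∀ k < 0, (g i j).coeff k = 0)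
    (hunit : IsUnit (Matrix.of fun i j => (g i j).coeff 0)) : IsUnit g.det := by
  set p : Matrix ι ι (PowerSeries R) := Matrix.of fun i j => PowerSeries.mk fun k => (g i j).coeff k
  have hgp : (HahnSeries.ofPowerSeries ℤ R).mapMatrix p = g := by
    ext i j k
    simp only [RingHom.mapMatrix_apply, Matrix.map_apply]
    change ((p i j : PowerSeries R) : LaurentSeries R).coeff k = _
    rw [PowerSeries.coeff_coe]
    split_ifs with hk
    · exact (hpow i j k hk).symm
    · simp [p, Int.natAbs_of_nonneg (not_lt.mp hk)]
  have hp : IsUnit p.det := by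
    rw [PowerSeries.isUnit_iff_constantCoeff, RingHom.map_det, ← Matrix.isUnit_iff_isUnit_det]
    convert hunit
    ext i j
    simp [p]
  rw [← hgp, ← RingHom.map_det]
  exact hp.map _

theorem laurentDeriv_coeff (f : LaurentSeries ℂ) (k : ℤ) :
    (laurentDeriv f).coeff k = ((k + 1 : ℤ) : ℂ) * f.coeff (k + 1) :=
  rfl

theorem laurentDeriv_coeff_eq_zero_of_lt {f : LaurentSeries ℂ} {n k : ℤ}
    (hneg : ∀ j < 0, f.coeff j = 0) (hgap : ∀ j, 0 < j → j < n → f.coeff j = 0)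
    (hk : k < n - 1) : (laurentDeriv f).coeff k = 0 := by
  rw [laurentDeriv_coeff]
  rcases lt_trichotomy (k + 1) 0 with h | h | h
  · rw [hneg _ h, mul_zero]
  · simp [h]
  · rw [hgap _ h (by omega), mul_zero]

theorem eq_of_mul_add_laurentDeriv_eq_mul {f b c : LaurentSeries ℂ} {n : ℤ}
    (hneg : ∀ k < 0, f.coeff k = 0) (hf0 : f.coeff 0 ≠ 0)
    (hgap : ∀ k, 0 < k → k < n → f.coeff k = 0)
    (hbc : ∀ k, n - 1 ≤ k → b.coeff k = c.coeff k) (h : f * b + laurentDeriv f = c * f) :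
    b = c := by
  by_contra hne
  have he : c - b ≠ 0 := sub_ne_zero.mpr (Ne.symm hne)
  have horder : (c - b).order < n - 1 := not_le.mp fun hle =>
    mt coeff_order_eq_zero.mp he (by rw [coeff_sub, hbc _ hle, sub_self])
  have hlead := coeff_mul_order_add_order f (c - b)
  rw [show f * (c - b) = laurentDeriv f by linear_combination -h,
    order_eq_zero_of_coeff_zero_ne_zero hf0 hneg, zero_add,
    laurentDeriv_coeff_eq_zero_of_lt hneg hgap horder] at hlead
  exact mul_ne_zero (leadingCoeff_ne_zero.mpr (ne_zero_of_coeff_ne_zero hf0))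
    (leadingCoeff_ne_zero.mpr he) hlead.symm

theorem mul_add_laurentDeriv_eq_mul_of_gauge_eq {N : ℕ}
    {g B C : Matrix (Fin N) (Fin N) (LaurentSeries ℂ)} (hdet : IsUnit g.det) (hB : B.IsDiag)
    (hC : C.IsDiag) (h : g * B * g⁻¹ + matrixLaurentDeriv g * g⁻¹ = C) (i : Fin N) :
    g i i * B i i + laurentDeriv (g i i) = C i i * g i i := by
  have hmul : g * B + matrixLaurentDeriv g = C * g := by
    rw [← h, add_mul, Matrix.nonsing_inv_mul_cancel_right _ _ hdet,
      Matrix.nonsing_inv_mul_cancel_right _ _ hdet]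
  rw [← hB.diagonal_diag, ← hC.diagonal_diag] at hmul
  simpa [Matrix.mul_diagonal, Matrix.diagonal_mul, matrixLaurentDeriv] using
    congrFun (congrFun hmul i) i

theorem stmt_11_general (N n : ℕ)
    (B C : Matrix (Fin N) (Fin N) (LaurentSeries ℂ))
    (hB_supp : ∀ k : ℤ, (k < -(n : ℤ) ∨ (n : ℤ) - 1 ≤ k) →
      ∀ i j : Fin N, (B i j).coeff k = 0)
    (hC_supp : ∀ k : ℤ, (k < -(n : ℤ) ∨ (n : ℤ) - 1 ≤ k) →
      ∀ i j : Fin N, (C i j).coeff k = 0)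
    (hB_diag : ∀ k : ℤ, (Matrix.of fun i j : Fin N => (B i j).coeff k).IsDiag)
    (hC_diag : ∀ k : ℤ, (Matrix.of fun i j : Fin N => (C i j).coeff k).IsDiag)
    (hg : ∃ g : Matrix (Fin N) (Fin N) (LaurentSeries ℂ),
      -- entries of `g` are formal power series
      (∀ i j : Fin N, ∀ k : ℤ, k < 0 → (g i j).coeff k = 0) ∧
      -- the constant term `g(0)` is invertible, i.e. `g ∈ GL_N(ℂ[[z]])`
      IsUnit (Matrix.of fun i j : Fin N => (g i j).coeff 0) ∧
      -- `g` is unipotent upper triangular modulo `z^n`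
      (∀ i j : Fin N, j < i → ∀ k : ℤ, k < (n : ℤ) → (g i j).coeff k = 0) ∧
      (∀ i : Fin N, (g i i).coeff 0 = 1 ∧
        ∀ k : ℤ, 0 < k → k < (n : ℤ) → (g i i).coeff k = 0) ∧
      g * B * g⁻¹ + matrixLaurentDeriv g * g⁻¹ = C) :
    B = C := by
  obtain ⟨g, hpow, hunit, -, hudiag, hgauge⟩ := hg
  have hB := Matrix.isDiag_of_forall_isDiag_coeff hB_diag
  have hC := Matrix.isDiag_of_forall_isDiag_coeff hC_diag
  have hentry := mul_add_laurentDeriv_eq_mul_of_gauge_eq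
    (LaurentSeries.isUnit_det_of_isUnit_coeff_zero hpow hunit) hB hC hgauge
  rw [← hB.diagonal_diag, ← hC.diagonal_diag]
  congr 1
  funext i
  refine eq_of_mul_add_laurentDeriv_eq_mul (hpow i i) ((hudiag i).1 ▸ one_ne_zero) (hudiag i).2
    (fun k hk => ?_) (hentry i)
  exact (hB_supp k (Or.inr hk) i i).trans (hC_supp k (Or.inr hk) i i).symm

/-- Uniqueness of the formal normal form: if `B = Σ_{j=−n}^{n−2} B_j z^j` and
`C = Σ_{j=−n}^{n−2} C_j z^j` are matrix Laurent series with all coefficients diagonal,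
`B_{−n}` has pairwise distinct diagonal entries, and some `g ∈ GL_N(ℂ[[z]])` which is
unipotent upper triangular modulo `z^n` satisfies `g·B·g⁻¹ + g′·g⁻¹ = C`, then
`B = C`. -/
theorem stmt_11 (N n : ℕ) (hN : 1 ≤ N) (hn : 2 ≤ n)
    (B C : Matrix (Fin N) (Fin N) (LaurentSeries ℂ))
    (hB_supp : ∀ k : ℤ, (k < -(n : ℤ) ∨ (n : ℤ) - 1 ≤ k) →
      ∀ i j : Fin N, (B i j).coeff k = 0)
    (hC_supp : ∀ k : ℤ, (k < -(n : ℤ) ∨ (n : ℤ) - 1 ≤ k) →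
      ∀ i j : Fin N, (C i j).coeff k = 0)
    (hB_diag : ∀ k : ℤ, (Matrix.of fun i j : Fin N => (B i j).coeff k).IsDiag)
    (hC_diag : ∀ k : ℤ, (Matrix.of fun i j : Fin N => (C i j).coeff k).IsDiag)
    (hB_lead_distinct : Function.Injective fun i : Fin N => (B i i).coeff (-(n : ℤ)))
    (hg : ∃ g : Matrix (Fin N) (Fin N) (LaurentSeries ℂ),
      -- entries of `g` are formal power series
      (∀ i j : Fin N, ∀ k : ℤ, k < 0 → (g i j).coeff k = 0) ∧
      -- the constant term `g(0)` is invertible, i.e. `g ∈ GL_N(ℂ[[z]])`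
      IsUnit (Matrix.of fun i j : Fin N => (g i j).coeff 0) ∧
      -- `g` is unipotent upper triangular modulo `z^n`
      (∀ i j : Fin N, j < i → ∀ k : ℤ, k < (n : ℤ) → (g i j).coeff k = 0) ∧
      (∀ i : Fin N, (g i i).coeff 0 = 1 ∧
        ∀ k : ℤ, 0 < k → k < (n : ℤ) → (g i i).coeff k = 0) ∧
      g * B * g⁻¹ + matrixLaurentDeriv g * g⁻¹ = C) :
    B = C :=
  stmt_11_general N n B C hB_supp hC_supp hB_diag hC_diag hg
end
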